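/- Let 0 < μ < 1, λ₀ > 0 and t₀ ∈ ℝ, and define u : ℝ → ℝ by u(t) := ((1−μ) λ₀ · max(t₀ − t, 0))^{1/(1−μ)}. Then u is differentiable at every t ∈ ℝ and u′(t) = −λ₀ · u(t)^μ for all t ∈ ℝ. In particular, u vanishes identically for t ≥ t₀ (a dead core forms), and the function (x,t) ↦ u(t) on ℝⁿ × ℝ is a classical solution of |Du|^p F(D²u) − u_t = λ₀ u^μ χ_{{u>0}} for every F with F(0) = 0 and every p ≥ 0. -/

import Mathlib

open Set Metric MeasureTheory Filter Topology

noncomputable section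

attribute [local instance] Matrix.normedAddCommGroup Matrix.normedSpace

/-- Euclidean space `ℝⁿ`. -/
abbrev ESp (n : ℕ) := EuclideanSpace ℝ (Fin n)

variable {n : ℕ}

/-- The Pucci maximal operator `𝒫⁺_{λ,Λ}`. -/
def pucciPlus (lam Lam : ℝ) (X : Matrix (Fin n) (Fin n) ℝ) : ℝ :=
  if hX : X.IsHermitian then
    ∑ i, (lam * min (hX.eigenvalues i) 0 + Lam * max (hX.eigenvalues i) 0)
  else 0

/-- The Pucci minimal operator `𝒫⁻_{λ,Λ}`. -/
def pucciMinus (lam Lam : ℝ) (X : Matrix (Fin n) (Fin n) ℝ) : ℝ :=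
  if hX : X.IsHermitian then
    ∑ i, (lam * max (hX.eigenvalues i) 0 + Lam * min (hX.eigenvalues i) 0)
  else 0

/-- Structural condition (F1): uniform ellipticity with `F(0) = 0`. -/
def CondF1 (lam Lam : ℝ) (F : Matrix (Fin n) (Fin n) ℝ → ℝ) : Prop :=
  F 0 = 0 ∧
  ∀ M N : Matrix (Fin n) (Fin n) ℝ, M.IsHermitian → N.IsHermitian →
    pucciMinus lam Lam (M - N) ≤ F M - F N ∧ F M - F N ≤ pucciPlus lam Lam (M - N)

/-- Structural condition (F2): `F` is convex or concave. -/
def CondF2 (F : Matrix (Fin n) (Fin n) ℝ → ℝ) : Prop :=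
  ConvexOn ℝ univ F ∨ ConcaveOn ℝ univ F

/-- Structural condition (F3): `F ∈ C^{1,κ}` for some `κ ∈ (0,1]`. -/
def CondF3 (F : Matrix (Fin n) (Fin n) ℝ → ℝ) : Prop :=
  ∃ κ ∈ Ioc (0:ℝ) 1, ContDiff ℝ 1 F ∧
    ∃ C : ℝ, ∀ X Y : Matrix (Fin n) (Fin n) ℝ,
      @Norm.norm _ ContinuousLinearMap.hasOpNorm (fderiv ℝ F X - fderiv ℝ F Y) ≤ C * ‖X - Y‖ ^ κ

/-- Spatial gradient `Du` of a function on `ℝⁿ × ℝ`. -/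
def spaceGrad (u : ESp n × ℝ → ℝ) (z : ESp n × ℝ) : ESp n :=
  gradient (fun x => u (x, z.2)) z.1

/-- Spatial Hessian `D²u`, as a matrix, of a function on `ℝⁿ × ℝ`. -/
def spaceHess (u : ESp n × ℝ → ℝ) (z : ESp n × ℝ) : Matrix (Fin n) (Fin n) ℝ :=
  Matrix.of fun i j =>
    iteratedFDeriv ℝ 2 (fun x => u (x, z.2)) z.1
      ![EuclideanSpace.single i (1:ℝ), EuclideanSpace.single j (1:ℝ)]

/-- Time derivative `∂ₜ u` of a function on `ℝⁿ × ℝ`. -/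
def timeDeriv (u : ESp n × ℝ → ℝ) (z : ESp n × ℝ) : ℝ :=
  deriv (fun t => u (z.1, t)) z.2

/-- `φ` touches `u` from above at `z₀` (within `Ω`). -/
def TouchesFromAbove (u φ : ESp n × ℝ → ℝ) (Ω : Set (ESp n × ℝ)) (z₀ : ESp n × ℝ) : Prop :=
  φ z₀ = u z₀ ∧ ∀ᶠ z in nhdsWithin z₀ Ω, u z ≤ φ z

/-- `φ` touches `u` from below at `z₀` (within `Ω`). -/
def TouchesFromBelow (u φ : ESp n × ℝ → ℝ) (Ω : Set (ESp n × ℝ)) (z₀ : ESp n × ℝ) : Prop :=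
  φ z₀ = u z₀ ∧ ∀ᶠ z in nhdsWithin z₀ Ω, φ z ≤ u z

/-- Viscosity subsolution of `|Du|^p F(D²u) - uₜ = rhs (x,t) u` on `Ω`. -/
def ViscSubsol (p : ℝ) (F : Matrix (Fin n) (Fin n) ℝ → ℝ)
    (rhs : ESp n × ℝ → ℝ → ℝ) (Ω : Set (ESp n × ℝ)) (u : ESp n × ℝ → ℝ) : Prop :=
  ∀ φ : ESp n × ℝ → ℝ, ContDiff ℝ 2 φ →
    ∀ z₀ ∈ Ω, TouchesFromAbove u φ Ω z₀ → spaceGrad φ z₀ ≠ 0 →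
      rhs z₀ (u z₀) ≤ ‖spaceGrad φ z₀‖ ^ p * F (spaceHess φ z₀) - timeDeriv φ z₀

/-- Viscosity supersolution of `|Du|^p F(D²u) - uₜ = rhs (x,t) u` on `Ω`. -/
def ViscSupersol (p : ℝ) (F : Matrix (Fin n) (Fin n) ℝ → ℝ)
    (rhs : ESp n × ℝ → ℝ → ℝ) (Ω : Set (ESp n × ℝ)) (u : ESp n × ℝ → ℝ) : Prop :=
  ∀ φ : ESp n × ℝ → ℝ, ContDiff ℝ 2 φ →
    ∀ z₀ ∈ Ω, TouchesFromBelow u φ Ω z₀ → spaceGrad φ z₀ ≠ 0 →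
      ‖spaceGrad φ z₀‖ ^ p * F (spaceHess φ z₀) - timeDeriv φ z₀ ≤ rhs z₀ (u z₀)

/-- Viscosity solution. -/
def ViscSol (p : ℝ) (F : Matrix (Fin n) (Fin n) ℝ → ℝ)
    (rhs : ESp n × ℝ → ℝ → ℝ) (Ω : Set (ESp n × ℝ)) (u : ESp n × ℝ → ℝ) : Prop :=
  ViscSubsol p F rhs Ω u ∧ ViscSupersol p F rhs Ω u

/-- The dead-core right-hand side `λ₀(x,t) s^μ χ_{s>0}`. -/
def dcpRHS (lam₀ : ESp n × ℝ → ℝ) (μ : ℝ) : ESp n × ℝ → ℝ → ℝ :=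
  fun z s => lam₀ z * (if 0 < s then s ^ μ else 0)

/-- `∂ₜ u ≥ g` in the viscosity sense. -/
def ViscTimeDerivGE (g : ESp n × ℝ → ℝ) (Ω : Set (ESp n × ℝ)) (u : ESp n × ℝ → ℝ) : Prop :=
  ∀ φ : ESp n × ℝ → ℝ, ContDiff ℝ 2 φ →
    ∀ z₀ ∈ Ω, TouchesFromBelow u φ Ω z₀ → g z₀ ≤ timeDeriv φ z₀

/-- `∂ₜ u ≤ g` in the viscosity sense. -/
def ViscTimeDerivLE (g : ESp n × ℝ → ℝ) (Ω : Set (ESp n × ℝ)) (u : ESp n × ℝ → ℝ) : Prop :=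
  ∀ φ : ESp n × ℝ → ℝ, ContDiff ℝ 2 φ →
    ∀ z₀ ∈ Ω, TouchesFromAbove u φ Ω z₀ → timeDeriv φ z₀ ≤ g z₀

/-- The intrinsic scaling exponent `θ = (2+p)(1-μ)/(1+p-μ)`. -/
def thetaExp (p μ : ℝ) : ℝ := (2 + p) * (1 - μ) / (1 + p - μ)

/-- The sharp regularity exponent `α = (2+p)/(1+p-μ)`. -/
def alphaExp (p μ : ℝ) : ℝ := (2 + p) / (1 + p - μ)

/-- The intrinsic parabolic distance `dist_p`. -/
def distP (θ : ℝ) (z w : ESp n × ℝ) : ℝ := ‖z.1 - w.1‖ + |z.2 - w.2| ^ (1 / θ)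

/-- Intrinsic parabolic cylinder `Q_r(x₀,t₀)`. -/
def pCyl (θ r : ℝ) (z : ESp n × ℝ) : Set (ESp n × ℝ) :=
  ball z.1 r ×ˢ Ioo (z.2 - r ^ θ) (z.2 + r ^ θ)

/-- Intrinsic parabolic cylinder `Q_r⁻(x₀,t₀)`. -/
def pCylMinus (θ r : ℝ) (z : ESp n × ℝ) : Set (ESp n × ℝ) :=
  ball z.1 r ×ˢ Ioc (z.2 - r ^ θ) z.2

/-- Intrinsic parabolic cylinder `Q_r⁺(x₀,t₀)`. -/
def pCylPlus (θ r : ℝ) (z : ESp n × ℝ) : Set (ESp n × ℝ) :=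
  ball z.1 r ×ˢ Ico z.2 (z.2 + r ^ θ)

/-- Parabolic boundary of `Q_r⁻(x₀,t₀)`. -/
def parBdryCylMinus (θ r : ℝ) (z : ESp n × ℝ) : Set (ESp n × ℝ) :=
  (closedBall z.1 r ×ˢ {z.2 - r ^ θ}) ∪ (sphere z.1 r ×ˢ Ioc (z.2 - r ^ θ) z.2)

/-- Parabolic boundary of `Q × [a,b)`. -/
def parBdry (Q : Set (ESp n)) (a b : ℝ) : Set (ESp n × ℝ) :=
  (closure Q ×ˢ {a}) ∪ (frontier Q ×ˢ Ico a b)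

/-- Positivity set `{u > 0}` inside `Ω`. -/
def posSet (Ω : Set (ESp n × ℝ)) (u : ESp n × ℝ → ℝ) : Set (ESp n × ℝ) :=
  {z ∈ Ω | 0 < u z}

/-! The profile is `s₊ ^ α` evaluated at `s = (1-μ)λ₀ (t₀ - t)`, with `α = 1/(1-μ) > 1`.
The map `s ↦ s₊ ^ α` is differentiable everywhere, since for `α > 1` both one-sided
derivatives at `0` vanish; the chain rule together with `α - 1 = αμ` and `(1-μ)λ₀ α = λ₀`
turns its derivative into `-λ₀ u^μ`. A function of `t` alone has vanishing spatial gradient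
and Hessian, so when `F 0 = 0` the equation reduces to this ODE. -/

section PosPartRpow

variable {α : ℝ}

theorem hasDerivWithinAt_posPart_rpow_Ici (hα : 1 ≤ α) {x : ℝ} (hx : 0 ≤ x) :
    HasDerivWithinAt (fun s : ℝ => max s 0 ^ α) (α * max x 0 ^ (α - 1)) (Ici 0) x := by
  rw [max_eq_left hx]
  exact (Real.hasDerivAt_rpow_const (Or.inr hα)).hasDerivWithinAt.congr_of_mem
    (fun s hs => by rw [max_eq_left (mem_Ici.1 hs)]) hx

theorem hasDerivWithinAt_posPart_rpow_Iic (hα : 1 < α) {x : ℝ} (hx : x ≤ 0) :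
    HasDerivWithinAt (fun s : ℝ => max s 0 ^ α) (α * max x 0 ^ (α - 1)) (Iic 0) x := by
  have hzero : ∀ s ∈ Iic (0 : ℝ), max s 0 ^ α = 0 := fun s hs => by
    rw [max_eq_right (mem_Iic.1 hs), Real.zero_rpow (by linarith)]
  rw [max_eq_right hx, Real.zero_rpow (by linarith), mul_zero]
  exact (hasDerivWithinAt_const x _ 0).congr_of_mem hzero hx

theorem hasDerivAt_posPart_rpow (hα : 1 < α) (x : ℝ) :
    HasDerivAt (fun s : ℝ => max s 0 ^ α) (α * max x 0 ^ (α - 1)) x := by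
  rcases lt_trichotomy x 0 with hx | rfl | hx
  · exact (hasDerivWithinAt_posPart_rpow_Iic hα hx.le).hasDerivAt (Iic_mem_nhds hx)
  · have h := (hasDerivWithinAt_posPart_rpow_Iic hα le_rfl).union
      (hasDerivWithinAt_posPart_rpow_Ici hα.le le_rfl)
    rwa [Iic_union_Ici, hasDerivWithinAt_univ] at h
  · exact (hasDerivWithinAt_posPart_rpow_Ici hα.le hx.le).hasDerivAt (Ici_mem_nhds hx)

end PosPartRpow

section DeadCoreProfile

variable {μ lam₀ t₀ : ℝ}

def deadCoreProfile (μ lam₀ t₀ : ℝ) (t : ℝ) : ℝ :=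
  ((1 - μ) * lam₀ * max (t₀ - t) 0) ^ (1 / (1 - μ))

theorem deadCoreProfile_nonneg (hμ : μ ≤ 1) (hlam₀ : 0 ≤ lam₀) (t : ℝ) :
    0 ≤ deadCoreProfile μ lam₀ t₀ t :=
  Real.rpow_nonneg (mul_nonneg (mul_nonneg (by linarith) hlam₀) (le_max_right _ _)) _

theorem deadCoreProfile_eq_zero_of_le (hμ : μ < 1) {t : ℝ} (ht : t₀ ≤ t) :
    deadCoreProfile μ lam₀ t₀ t = 0 := by
  have hα : 1 / (1 - μ) ≠ 0 := one_div_ne_zero (by linarith)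
  rw [deadCoreProfile, max_eq_right (by linarith), mul_zero, Real.zero_rpow hα]

theorem hasDerivAt_deadCoreProfile (hμ : μ ∈ Ioo (0 : ℝ) 1) (hlam₀ : 0 ≤ lam₀) (t : ℝ) :
    HasDerivAt (deadCoreProfile μ lam₀ t₀) (-(lam₀ * deadCoreProfile μ lam₀ t₀ t ^ μ)) t := by
  obtain ⟨hμ0, hμ1⟩ := hμ
  set c := (1 - μ) * lam₀
  set α := 1 / (1 - μ)
  have hc : 0 ≤ c := mul_nonneg (by linarith) hlam₀
  have hα : 1 < α := by rw [lt_one_div (by norm_num) (by linarith)]; linarith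
  have hcα : c * α = lam₀ := by simp only [c, α]; field_simp
  have hαμ : α * μ = α - 1 := by simp only [α]; field_simp; ring
  have hprofile : deadCoreProfile μ lam₀ t₀ = fun s => max (c * (t₀ - s)) 0 ^ α := by
    ext s
    rw [deadCoreProfile, mul_max_of_nonneg _ _ hc, mul_zero]
  have hinner : HasDerivAt (fun s => c * (t₀ - s)) (-c) t := by
    simpa using ((hasDerivAt_id t).const_sub t₀).const_mul c
  have h := (hasDerivAt_posPart_rpow hα (c * (t₀ - t))).comp t hinner
  rw [hprofile, ← Real.rpow_mul (le_max_right _ _), hαμ, ← hcα]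
  exact h.congr_deriv (by ring)

end DeadCoreProfile

section SpaceIndependent

variable (v : ℝ → ℝ) (z : ESp n × ℝ)

theorem spaceGrad_comp_snd : spaceGrad (fun w : ESp n × ℝ => v w.2) z = 0 :=
  gradient_const z.1 (v z.2)

theorem spaceHess_comp_snd : spaceHess (fun w : ESp n × ℝ => v w.2) z = 0 := by
  ext i j
  simp only [spaceHess, Matrix.of_apply, iteratedFDeriv_const_of_ne two_ne_zero (v z.2)]
  rfl

theorem timeDeriv_comp_snd : timeDeriv (fun w : ESp n × ℝ => v w.2) z = deriv v z.2 :=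
  rfl

end SpaceIndependent

/-- **The space-independent dead-core profile** `u(t) = ((1-μ)λ₀ (t₀-t)₊)^{1/(1-μ)}`
solves `u' = -λ₀ u^μ` and generates a classical dead-core solution. -/
theorem space_independent_dead_core_profile
    (n : ℕ) (μ lam₀ t₀ : ℝ) (hμ : μ ∈ Ioo (0:ℝ) 1) (hlam₀ : 0 < lam₀)
    (u : ℝ → ℝ) (hu : u = fun t => ((1 - μ) * lam₀ * max (t₀ - t) 0) ^ (1 / (1 - μ))) :
    (∀ t : ℝ, HasDerivAt u (-(lam₀ * u t ^ μ)) t) ∧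
    (∀ t : ℝ, t₀ ≤ t → u t = 0) ∧
    (∀ (F : Matrix (Fin n) (Fin n) ℝ → ℝ), F 0 = 0 → ∀ p : ℝ, 0 ≤ p →
      ∀ z : ESp n × ℝ,
        ‖spaceGrad (fun w : ESp n × ℝ => u w.2) z‖ ^ p *
            F (spaceHess (fun w : ESp n × ℝ => u w.2) z)
          - timeDeriv (fun w : ESp n × ℝ => u w.2) z
          = lam₀ * (if 0 < u z.2 then u z.2 ^ μ else 0)) := by
  obtain rfl : u = deadCoreProfile μ lam₀ t₀ := hu
  have hderiv := hasDerivAt_deadCoreProfile (t₀ := t₀) hμ hlam₀.le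
  refine ⟨hderiv, fun t => deadCoreProfile_eq_zero_of_le hμ.2, ?_⟩
  intro F hF p _ z
  rw [spaceGrad_comp_snd, spaceHess_comp_snd, timeDeriv_comp_snd, (hderiv z.2).deriv, hF,
    mul_zero, zero_sub, neg_neg]
  split_ifs with hpos
  · rfl
  · rw [(deadCoreProfile_nonneg hμ.2.le hlam₀.le z.2).antisymm' (not_lt.1 hpos),
      Real.zero_rpow hμ.1.ne']

end
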